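/- Let G be a connected finite simple graph on at least two vertices, let H be a connected finite simple graph, and let H' be a connected subgraph of H on at least two vertices with diameter D_{H'} (taken with respect to the shortest-path metric of H'). Then λ(G, H) ≤ D_{H'}² · λ(G, H'). -/

import Mathlib

open scoped Classical
open Finset

/-- Degree of a vertex in a finite simple graph. -/
noncomputable def gdeg {V : Type*} [Fintype V] (G : SimpleGraph V) (v : V) : ℕ :=
  (G.neighborSet v).ncard

/-- The volume of a finite simple graph: the sum of the degrees of all vertices. -/
noncomputable def gvol {V : Type*} [Fintype V] (G : SimpleGraph V) : ℕ :=
  ∑ v, gdeg G v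

/-- The Rayleigh-type quotient `R_f(G, X)` for an embedding `f : V(G) → X` where `X`
carries a distance function `d`.  The sum over ordered pairs of adjacent vertices divided
by `2` is the sum over edges of `G`; the sum over ordered pairs of distinct vertices divided
by `2` is the sum over unordered pairs of distinct vertices of `G`. -/
noncomputable def Rf {V X : Type*} [Fintype V] (G : SimpleGraph V) (d : X → X → ℝ)
    (f : V → X) : ℝ :=
  ((gvol G : ℝ) * ((∑ u, ∑ v, if G.Adj u v then d (f u) (f v) ^ 2 else 0) / 2)) /
    ((∑ u, ∑ v, if u ≠ v then d (f u) (f v) ^ 2 * (gdeg G u : ℝ) * (gdeg G v : ℝ) else 0) / 2)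

/-- `lam G d` is `λ(G, X)`: the infimum of `R_f(G, X)` over nonconstant `f : V(G) → X`. -/
noncomputable def lam {V X : Type*} [Fintype V] (G : SimpleGraph V) (d : X → X → ℝ) : ℝ :=
  sInf {r | ∃ f : V → X, (∃ u v, f u ≠ f v) ∧ r = Rf G d f}

/-- The diameter of a finite simple graph: the maximum shortest-path distance over pairs. -/
noncomputable def gDiam {V : Type*} [Fintype V] (H : SimpleGraph V) : ℕ :=
  Finset.univ.sup fun p : V × V => H.dist p.1 p.2

/-- The maximum degree of a finite simple graph. -/
noncomputable def gMaxDeg {V : Type*} [Fintype V] (G : SimpleGraph V) : ℕ :=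
  Finset.univ.sup (gdeg G)

/-- The minimum degree of a finite simple graph. -/
noncomputable def gMinDeg {V : Type*} [Fintype V] (G : SimpleGraph V) : ℕ :=
  sInf (Set.range (gdeg G))

/-!
Viewing a nonconstant map `f : V(G) → V(H')` as a map into `V(H)` can only shrink the numerator
of `R_f`, since `d_H ≤ d_{H'}` on `V(H')`. It shrinks the denominator by at most the factor
`D_{H'}²`, since two distinct vertices of `H'` are at `H'`-distance at most `D_{H'}` and at
`H`-distance at least `1`. Hence `R_f(G, H) ≤ D_{H'}² R_f(G, H')` for every such `f`, and taking
infima gives the claim.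
-/

namespace SimpleGraph

variable {V V' : Type*} {G : SimpleGraph V} {G' : SimpleGraph V'} {u v : V}

theorem Reachable.dist_map_le (φ : G →g G') (h : G.Reachable u v) :
    G'.dist (φ u) (φ v) ≤ G.dist u v := by
  obtain ⟨p, hp⟩ := h.exists_walk_length_eq_dist
  exact hp ▸ (p.length_map φ) ▸ G'.dist_le (p.map φ)

theorem dist_le_gDiam [Fintype V] (u v : V) : G.dist u v ≤ gDiam G :=
  Finset.le_sup (f := fun p : V × V => G.dist p.1 p.2) (Finset.mem_univ (u, v))

theorem dist_le_gDiam_mul_dist [Fintype V] (φ : G →g G') (hφ : Function.Injective φ)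
    (hG' : G'.Connected) (u v : V) : G.dist u v ≤ gDiam G * G'.dist (φ u) (φ v) := by
  rcases eq_or_ne u v with rfl | huv
  · simp
  · calc G.dist u v ≤ gDiam G := dist_le_gDiam u v
      _ ≤ gDiam G * G'.dist (φ u) (φ v) :=
        Nat.le_mul_of_pos_right _ (hG'.pos_dist_of_ne (hφ.ne huv))

end SimpleGraph

theorem div_le_mul_div_of_le {a a' b b' k : ℝ} (ha : 0 ≤ a) (haa' : a ≤ a') (hb : 0 ≤ b)
    (hbb' : b ≤ b') (hb'k : b' ≤ k * b) : a / b ≤ k * (a' / b') := by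
  rcases hb.eq_or_lt with rfl | hb
  -- `b = 0` forces `b' = 0`, and then both sides are `0` because `x / 0 = 0`.
  · simp [le_antisymm (by simpa using hb'k) hbb']
  have hb' : 0 < b' := hb.trans_le hbb'
  rw [div_le_iff₀ hb, mul_div_assoc', div_mul_eq_mul_div, le_div_iff₀ hb']
  nlinarith [mul_le_mul_of_nonneg_left hb'k ha]

section RayleighQuotient

variable {V X Y : Type*} [Fintype V] (G : SimpleGraph V)

noncomputable def edgeEnergy (d : X → X → ℝ) (f : V → X) : ℝ :=
  ∑ u, ∑ v, if G.Adj u v then d (f u) (f v) ^ 2 else 0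

noncomputable def pairEnergy (d : X → X → ℝ) (f : V → X) : ℝ :=
  ∑ u, ∑ v, if u ≠ v then d (f u) (f v) ^ 2 * (gdeg G u : ℝ) * (gdeg G v : ℝ) else 0

theorem Rf_eq (d : X → X → ℝ) (f : V → X) :
    Rf G d f = gvol G * edgeEnergy G d f / pairEnergy G d f := by
  unfold Rf edgeEnergy pairEnergy
  ring

theorem edgeEnergy_nonneg (d : X → X → ℝ) (f : V → X) : 0 ≤ edgeEnergy G d f :=
  sum_nonneg fun _ _ => sum_nonneg fun _ _ => by split_ifs <;> positivity

theorem pairEnergy_nonneg (d : X → X → ℝ) (f : V → X) : 0 ≤ pairEnergy G d f :=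
  sum_nonneg fun _ _ => sum_nonneg fun _ _ => by split_ifs <;> positivity

theorem Rf_nonneg (d : X → X → ℝ) (f : V → X) : 0 ≤ Rf G d f := by
  rw [Rf_eq]
  have := edgeEnergy_nonneg G d f
  have := pairEnergy_nonneg G d f
  positivity

variable {G}

theorem Rf_comp_le_mul_Rf {dX : X → X → ℝ} {dY : Y → Y → ℝ} {g : Y → X} {c : ℝ}
    (hX : ∀ y y', 0 ≤ dX (g y) (g y')) (hXY : ∀ y y', dX (g y) (g y') ≤ dY y y')
    (hYX : ∀ y y', dY y y' ≤ c * dX (g y) (g y')) (f : V → Y) :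
    Rf G dX (g ∘ f) ≤ c ^ 2 * Rf G dY f := by
  have hsq_le : ∀ y y', dX (g y) (g y') ^ 2 ≤ dY y y' ^ 2 := fun y y' =>
    pow_le_pow_left₀ (hX y y') (hXY y y') 2
  have hsq_le_mul : ∀ y y', dY y y' ^ 2 ≤ c ^ 2 * dX (g y) (g y') ^ 2 := fun y y' => by
    rw [← mul_pow]
    exact pow_le_pow_left₀ ((hX y y').trans (hXY y y')) (hYX y y') 2
  have hedge : edgeEnergy G dX (g ∘ f) ≤ edgeEnergy G dY f := by
    refine sum_le_sum fun u _ => sum_le_sum fun v _ => ?_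
    split_ifs
    exacts [hsq_le _ _, le_rfl]
  have hpair : pairEnergy G dX (g ∘ f) ≤ pairEnergy G dY f := by
    refine sum_le_sum fun u _ => sum_le_sum fun v _ => ?_
    split_ifs
    exacts [by gcongr ?_ * _ * _; exact hsq_le _ _, le_rfl]
  have hscale : pairEnergy G dY f ≤ c ^ 2 * pairEnergy G dX (g ∘ f) := by
    simp only [pairEnergy, mul_sum]
    refine sum_le_sum fun u _ => sum_le_sum fun v _ => ?_
    split_ifs
    · rw [← mul_assoc, ← mul_assoc]
      gcongr
      exact hsq_le_mul _ _
    · simp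
  rw [Rf_eq, Rf_eq, mul_div_assoc, mul_div_assoc, mul_left_comm]
  exact mul_le_mul_of_nonneg_left (div_le_mul_div_of_le (edgeEnergy_nonneg G _ _) hedge
    (pairEnergy_nonneg G _ _) hpair hscale) (Nat.cast_nonneg _)

theorem lam_eq_zero_of_subsingleton [Subsingleton V] (d : X → X → ℝ) : lam G d = 0 := by
  have hempty : {r | ∃ f : V → X, (∃ u v, f u ≠ f v) ∧ r = Rf G d f} = ∅ :=
    Set.eq_empty_of_forall_notMem fun _ ⟨f, ⟨u, v, huv⟩, _⟩ => huv (by rw [Subsingleton.elim u v])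
  rw [lam, hempty, Real.sInf_empty]

theorem lam_le_mul_lam_of_forall_Rf_le [Nontrivial Y] {dX : X → X → ℝ} {dY : Y → Y → ℝ}
    {g : Y → X} (hg : Function.Injective g) {c : ℝ} (hc : 0 ≤ c)
    (h : ∀ f : V → Y, Rf G dX (g ∘ f) ≤ c * Rf G dY f) : lam G dX ≤ c * lam G dY := by
  rcases subsingleton_or_nontrivial V with _ | _
  · simp [lam_eq_zero_of_subsingleton]
  obtain ⟨u, v, huv⟩ := exists_pair_ne V
  obtain ⟨y, y', hy⟩ := exists_pair_ne Y
  have hne : {r | ∃ f : V → Y, (∃ u v, f u ≠ f v) ∧ r = Rf G dY f}.Nonempty :=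
    ⟨_, fun w => if w = u then y else y', ⟨u, v, by simp [huv.symm, hy]⟩, rfl⟩
  have hbdd : BddBelow {r | ∃ f : V → X, (∃ u v, f u ≠ f v) ∧ r = Rf G dX f} :=
    ⟨0, by rintro _ ⟨f, -, rfl⟩; exact Rf_nonneg G dX f⟩
  rw [lam, lam, ← smul_eq_mul, ← Real.sInf_smul_of_nonneg hc]
  refine le_csInf hne.smul_set ?_
  rintro _ ⟨_, ⟨f, ⟨a, b, hab⟩, rfl⟩, rfl⟩
  exact (csInf_le hbdd ⟨g ∘ f, ⟨a, b, hg.ne hab⟩, rfl⟩).trans (h f)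

end RayleighQuotient

theorem stmt_12_general {V W : Type*} [Fintype V]
    (G : SimpleGraph V)
    (H : SimpleGraph W) (hH : H.Connected)
    (H' : H.Subgraph) [Fintype H'.verts]
    (hH' : H'.coe.Connected) (hcard : 2 ≤ Fintype.card H'.verts) :
    lam G (fun i j => (H.dist i j : ℝ)) ≤
      (gDiam H'.coe : ℝ) ^ 2 * lam G (fun i j : H'.verts => (H'.coe.dist i j : ℝ)) := by
  have : Nontrivial H'.verts := Fintype.one_lt_card_iff_nontrivial.mp hcard
  refine lam_le_mul_lam_of_forall_Rf_le Subtype.val_injective (sq_nonneg _) fun f => ?_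
  refine Rf_comp_le_mul_Rf (fun _ _ => Nat.cast_nonneg _) (fun a b => ?_) (fun a b => ?_) f
  · exact_mod_cast (hH'.preconnected a b).dist_map_le H'.hom
  · exact_mod_cast SimpleGraph.dist_le_gDiam_mul_dist H'.hom Subtype.val_injective hH a b

/-- For a connected finite simple graph `G` on at least two vertices, a
connected finite simple graph `H`, and a connected subgraph `H'` of `H` on at least two
vertices with diameter `D_{H'}` (in the shortest-path metric of `H'`),
`λ(G, H) ≤ D_{H'}² · λ(G, H')`. -/
theorem stmt_12 {V W : Type*} [Fintype V] [Fintype W]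
    (G : SimpleGraph V) (hG : G.Connected) (hV : 2 ≤ Fintype.card V)
    (H : SimpleGraph W) (hH : H.Connected)
    (H' : H.Subgraph) [Fintype H'.verts]
    (hH' : H'.coe.Connected) (hcard : 2 ≤ Fintype.card H'.verts) :
    lam G (fun i j => (H.dist i j : ℝ)) ≤
      (gDiam H'.coe : ℝ) ^ 2 * lam G (fun i j : H'.verts => (H'.coe.dist i j : ℝ)) :=
  stmt_12_general G H hH H' hH' hcard
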